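/- Let A ∈ ℂ^{n×n}, B ∈ ℂ^{n×m}, C ∈ ℂ^{m×n}, D ∈ ℂ^{m×m}, let X₀ ∈ ℂ^{n×n} be Hermitian with W_c(X₀) ≻ 0, and write W_c(X₀) = [[Q₀, C₀ᴴ],[C₀, R₀]]. Set A_F := A − B R₀⁻¹ C₀, P₀ := Q₀ − C₀ᴴR₀⁻¹C₀ (so P₀ ≻ 0 and R₀ ≻ 0), B̂ := P₀^{1/2}B, Â_F := P₀^{1/2} A_F P₀^{−1/2}, and for a Hermitian Δ ∈ ℂ^{n×n} let Δ̂ := P₀^{−1/2} Δ P₀^{−1/2}. Then det W_c(X₀ + Δ) = det W_c(X₀) · det( I_n − Δ̂ Â_F − Â_Fᴴ Δ̂ − Δ̂ B̂ R₀⁻¹ B̂ᴴ Δ̂ ). -/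

import Mathlib

open Matrix
open scoped ComplexOrder

/-!
With `R₀` invertible, the Schur complement of the `R₀`-block of `W_c(X₀ + Δ)` is the
Riccati-type expression `P₀ − Δ A_F − A_Fᴴ Δ − Δ B R₀⁻¹ Bᴴ Δ`, while that of `W_c(X₀)` is `P₀`.
Writing `P₀ = S S` with `S = P₀^{1/2}`, this expression is `S (I − Δ̂ Â_F − Â_Fᴴ Δ̂ − Δ̂ B̂ R₀⁻¹ B̂ᴴ Δ̂) S`,
so the ratio of the two determinants is the determinant of the bracket.
-/

/-- The square root of a positive semidefinite matrix, as defined in Mathlib (Dec 2024);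
removed from current Mathlib, restored here with its old definition. -/
noncomputable def Matrix.PosSemidef.sqrt {n 𝕜 : Type*} [RCLike 𝕜] [Fintype n] [DecidableEq n]
    {A : Matrix n n 𝕜} (hA : A.PosSemidef) : Matrix n n 𝕜 :=
  hA.1.eigenvectorUnitary.1 * diagonal ((↑) ∘ (√·) ∘ hA.1.eigenvalues) *
    (star hA.1.eigenvectorUnitary : Matrix n n 𝕜)

namespace Matrix.PosSemidef

variable {n 𝕜 : Type*} [RCLike 𝕜] [Fintype n] [DecidableEq n] {A : Matrix n n 𝕜}

theorem isHermitian_sqrt (hA : A.PosSemidef) : hA.sqrt.IsHermitian := by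
  have hd : (diagonal ((↑) ∘ (√·) ∘ hA.1.eigenvalues) : Matrix n n 𝕜)ᴴ =
      diagonal ((↑) ∘ (√·) ∘ hA.1.eigenvalues) := by
    rw [diagonal_conjTranspose]
    congr 1
    funext i
    simp
  rw [IsHermitian, sqrt, conjTranspose_mul, conjTranspose_mul, hd, star_eq_conjTranspose,
    conjTranspose_conjTranspose, Matrix.mul_assoc]

theorem sqrt_mul_self (hA : A.PosSemidef) : hA.sqrt * hA.sqrt = A := by
  conv_rhs => rw [hA.1.spectral_theorem]
  rw [Unitary.conjStarAlgAut_apply]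
  simp only [sqrt, Matrix.mul_assoc]
  rw [← Matrix.mul_assoc (star _ : Matrix n n 𝕜) hA.1.eigenvectorUnitary.1,
    Unitary.coe_star_mul_self, Matrix.one_mul]
  congr 1
  rw [← Matrix.mul_assoc, diagonal_mul_diagonal]
  congr 2
  funext i
  simp only [Function.comp_apply]
  rw [← RCLike.ofReal_mul, Real.mul_self_sqrt (hA.eigenvalues_nonneg i)]

theorem isUnit_det_sqrt (hA : A.PosSemidef) (hdet : IsUnit A.det) : IsUnit hA.sqrt.det :=
  isUnit_of_mul_isUnit_left (by rwa [← det_mul, sqrt_mul_self])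

end Matrix.PosSemidef

theorem Matrix.det_fromBlocks_of_isUnit_det₂₂ {α m n : Type*} [CommRing α] [Fintype m]
    [Fintype n] [DecidableEq m] [DecidableEq n] (Q : Matrix n n α) (E : Matrix n m α)
    (F : Matrix m n α) {R : Matrix m m α} (hR : IsUnit R.det) :
    (fromBlocks Q E F R).det = R.det * (Q - E * R⁻¹ * F).det := by
  let := invertibleOfIsUnitDet R hR
  rw [det_fromBlocks₂₂, invOf_eq_nonsing_inv]

/-- With `Q = Q₀`, `C₀` the blocks of `W_c(X₀)` and `K = R₀⁻¹`, the left side is the Schur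
complement of `W_c(X₀ + Δ)`. -/
theorem schur_increment_eq {α m n : Type*} [CommRing α] [StarRing α] [Fintype m] [Fintype n]
    (A : Matrix n n α) (B : Matrix n m α) (C₀ : Matrix m n α) {K : Matrix m m α}
    (hK : K.IsHermitian) (Q Δ : Matrix n n α) :
    Q - Δ * A - Aᴴ * Δ - (C₀ᴴ - Δ * B) * K * (C₀ - Bᴴ * Δ) =
      (Q - C₀ᴴ * K * C₀) - Δ * (A - B * K * C₀) - (A - B * K * C₀)ᴴ * Δ
        - Δ * B * K * Bᴴ * Δ := by
  simp only [conjTranspose_sub, conjTranspose_mul, hK.eq, Matrix.sub_mul, Matrix.mul_sub,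
    Matrix.mul_assoc]
  abel

theorem riccati_rescale_eq_conj_nonsing_inv {α m n : Type*} [CommRing α] [StarRing α] [Fintype m]
    [Fintype n] [DecidableEq n] {S : Matrix n n α} (hS : S.IsHermitian) (hdet : IsUnit S.det)
    (F Δ : Matrix n n α) (B : Matrix n m α) (K : Matrix m m α) :
    1 - (S⁻¹ * Δ * S⁻¹) * (S * F * S⁻¹) - (S * F * S⁻¹)ᴴ * (S⁻¹ * Δ * S⁻¹)
        - (S⁻¹ * Δ * S⁻¹) * (S * B) * K * (S * B)ᴴ * (S⁻¹ * Δ * S⁻¹) =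
      S⁻¹ * (S * S - Δ * F - Fᴴ * Δ - Δ * B * K * Bᴴ * Δ) * S⁻¹ := by
  have hinvH : S⁻¹ᴴ = S⁻¹ := by rw [conjTranspose_nonsing_inv, hS.eq]
  simp only [conjTranspose_mul, hS.eq, hinvH, Matrix.sub_mul, Matrix.mul_sub, Matrix.mul_assoc,
    nonsing_inv_mul_cancel_left _ _ hdet, mul_nonsing_inv_cancel_left _ _ hdet,
    mul_nonsing_inv _ hdet]

theorem Matrix.det_eq_det_mul_det_conj_nonsing_inv {α n : Type*} [CommRing α] [Fintype n]
    [DecidableEq n] {S : Matrix n n α} (hdet : IsUnit S.det) (M : Matrix n n α) :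
    M.det = (S * S).det * (S⁻¹ * M * S⁻¹).det := by
  have hinv : S.det * S⁻¹.det = 1 := by rw [← det_mul, mul_nonsing_inv S hdet, det_one]
  rw [det_mul, det_mul, det_mul]
  linear_combination (-(S.det * S⁻¹.det) - 1) * M.det * hinv

theorem det_Wc_increment_formula_general {n m : ℕ}
    (A : Matrix (Fin n) (Fin n) ℂ) (B : Matrix (Fin n) (Fin m) ℂ)
    (C : Matrix (Fin m) (Fin n) ℂ) (D : Matrix (Fin m) (Fin m) ℂ)
    (X₀ : Matrix (Fin n) (Fin n) ℂ) (hX₀ : X₀.IsHermitian)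
    (Q₀ : Matrix (Fin n) (Fin n) ℂ) (hQ₀ : Q₀ = -(X₀ * A) - Aᴴ * X₀)
    (C₀ : Matrix (Fin m) (Fin n) ℂ) (hC₀ : C₀ = C - Bᴴ * X₀)
    (R₀ : Matrix (Fin m) (Fin m) ℂ) (hR₀ : R₀ = D + Dᴴ) (hR₀pd : R₀.PosDef)
    (AF : Matrix (Fin n) (Fin n) ℂ) (hAF : AF = A - B * R₀⁻¹ * C₀)
    (P₀ : Matrix (Fin n) (Fin n) ℂ) (hP₀def : P₀ = Q₀ - C₀ᴴ * R₀⁻¹ * C₀)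
    (hP₀ : P₀.PosDef)
    (Δ : Matrix (Fin n) (Fin n) ℂ) :
    (fromBlocks (-((X₀ + Δ) * A) - Aᴴ * (X₀ + Δ)) (Cᴴ - (X₀ + Δ) * B)
        (C - Bᴴ * (X₀ + Δ)) (D + Dᴴ)).det =
      (fromBlocks (-(X₀ * A) - Aᴴ * X₀) (Cᴴ - X₀ * B) (C - Bᴴ * X₀) (D + Dᴴ)).det *
        (1 - ((hP₀.posSemidef.sqrt)⁻¹ * Δ * (hP₀.posSemidef.sqrt)⁻¹) *
              (hP₀.posSemidef.sqrt * AF * (hP₀.posSemidef.sqrt)⁻¹)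
           - (hP₀.posSemidef.sqrt * AF * (hP₀.posSemidef.sqrt)⁻¹)ᴴ *
              ((hP₀.posSemidef.sqrt)⁻¹ * Δ * (hP₀.posSemidef.sqrt)⁻¹)
           - ((hP₀.posSemidef.sqrt)⁻¹ * Δ * (hP₀.posSemidef.sqrt)⁻¹) *
              (hP₀.posSemidef.sqrt * B) * R₀⁻¹ * (hP₀.posSemidef.sqrt * B)ᴴ *
              ((hP₀.posSemidef.sqrt)⁻¹ * Δ * (hP₀.posSemidef.sqrt)⁻¹)).det := by
  have hR : IsUnit R₀.det := (isUnit_iff_isUnit_det R₀).mp hR₀pd.isUnit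
  have hS : IsUnit hP₀.posSemidef.sqrt.det :=
    hP₀.posSemidef.isUnit_det_sqrt ((isUnit_iff_isUnit_det P₀).mp hP₀.isUnit)
  have hC₀H : Cᴴ - X₀ * B = C₀ᴴ := by
    rw [hC₀, conjTranspose_sub, conjTranspose_mul, conjTranspose_conjTranspose, hX₀.eq]
  have hW₀ : fromBlocks (-(X₀ * A) - Aᴴ * X₀) (Cᴴ - X₀ * B) (C - Bᴴ * X₀) (D + Dᴴ) =
      fromBlocks Q₀ C₀ᴴ C₀ R₀ := by
    rw [hQ₀, hC₀H, hC₀, hR₀]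
  have hWΔ : fromBlocks (-((X₀ + Δ) * A) - Aᴴ * (X₀ + Δ)) (Cᴴ - (X₀ + Δ) * B)
      (C - Bᴴ * (X₀ + Δ)) (D + Dᴴ) =
      fromBlocks (Q₀ - Δ * A - Aᴴ * Δ) (C₀ᴴ - Δ * B) (C₀ - Bᴴ * Δ) R₀ := by
    rw [← hC₀H, hQ₀, hC₀, hR₀]
    congr 1 <;> simp only [Matrix.add_mul, Matrix.mul_add] <;> abel
  rw [hWΔ, hW₀, det_fromBlocks_of_isUnit_det₂₂ _ _ _ hR, det_fromBlocks_of_isUnit_det₂₂ _ _ _ hR,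
    schur_increment_eq _ _ _ hR₀pd.1.inv, ← hAF, ← hP₀def,
    riccati_rescale_eq_conj_nonsing_inv hP₀.posSemidef.isHermitian_sqrt hS,
    det_eq_det_mul_det_conj_nonsing_inv hS
      (P₀ - Δ * AF - AFᴴ * Δ - Δ * B * R₀⁻¹ * Bᴴ * Δ),
    hP₀.posSemidef.sqrt_mul_self]
  ring

/-- reformulation of the determinant of the incremented LMI:
`det W_c(X₀ + Δ) = det W_c(X₀) · det(I − Δ̂ Â_F − Â_Fᴴ Δ̂ − Δ̂ B̂ R₀⁻¹ B̂ᴴ Δ̂)`,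
where `Â_F = P₀^{1/2} A_F P₀^{−1/2}`, `B̂ = P₀^{1/2} B`, `Δ̂ = P₀^{−1/2} Δ P₀^{−1/2}`. -/
theorem det_Wc_increment_formula {n m : ℕ}
    (A : Matrix (Fin n) (Fin n) ℂ) (B : Matrix (Fin n) (Fin m) ℂ)
    (C : Matrix (Fin m) (Fin n) ℂ) (D : Matrix (Fin m) (Fin m) ℂ)
    (X₀ : Matrix (Fin n) (Fin n) ℂ) (hX₀ : X₀.IsHermitian)
    (hW : (fromBlocks (-(X₀ * A) - Aᴴ * X₀) (Cᴴ - X₀ * B) (C - Bᴴ * X₀) (D + Dᴴ)).PosDef)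
    (Q₀ : Matrix (Fin n) (Fin n) ℂ) (hQ₀ : Q₀ = -(X₀ * A) - Aᴴ * X₀)
    (C₀ : Matrix (Fin m) (Fin n) ℂ) (hC₀ : C₀ = C - Bᴴ * X₀)
    (R₀ : Matrix (Fin m) (Fin m) ℂ) (hR₀ : R₀ = D + Dᴴ) (hR₀pd : R₀.PosDef)
    (AF : Matrix (Fin n) (Fin n) ℂ) (hAF : AF = A - B * R₀⁻¹ * C₀)
    (P₀ : Matrix (Fin n) (Fin n) ℂ) (hP₀def : P₀ = Q₀ - C₀ᴴ * R₀⁻¹ * C₀)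
    (hP₀ : P₀.PosDef)
    (Δ : Matrix (Fin n) (Fin n) ℂ) (hΔ : Δ.IsHermitian) :
    (fromBlocks (-((X₀ + Δ) * A) - Aᴴ * (X₀ + Δ)) (Cᴴ - (X₀ + Δ) * B)
        (C - Bᴴ * (X₀ + Δ)) (D + Dᴴ)).det =
      (fromBlocks (-(X₀ * A) - Aᴴ * X₀) (Cᴴ - X₀ * B) (C - Bᴴ * X₀) (D + Dᴴ)).det *
        (1 - ((hP₀.posSemidef.sqrt)⁻¹ * Δ * (hP₀.posSemidef.sqrt)⁻¹) *
              (hP₀.posSemidef.sqrt * AF * (hP₀.posSemidef.sqrt)⁻¹)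
           - (hP₀.posSemidef.sqrt * AF * (hP₀.posSemidef.sqrt)⁻¹)ᴴ *
              ((hP₀.posSemidef.sqrt)⁻¹ * Δ * (hP₀.posSemidef.sqrt)⁻¹)
           - ((hP₀.posSemidef.sqrt)⁻¹ * Δ * (hP₀.posSemidef.sqrt)⁻¹) *
              (hP₀.posSemidef.sqrt * B) * R₀⁻¹ * (hP₀.posSemidef.sqrt * B)ᴴ *
              ((hP₀.posSemidef.sqrt)⁻¹ * Δ * (hP₀.posSemidef.sqrt)⁻¹)).det :=
  det_Wc_increment_formula_general A B C D X₀ hX₀ Q₀ hQ₀ C₀ hC₀ R₀ hR₀ hR₀pd AF hAF P₀ hP₀def hP₀ Δ
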